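/- Σ_{λ∈Y} f_λ² z^{|λ|}/|λ|! = 1/(1−z) as formal power series, i.e., Σ_{λ⊢n} f_λ² = n! for every n ≥ 0. -/

import Mathlib

/-!
Young's lattice is a 1-differential poset. Every diagram has exactly one more upper cover than
lower covers (row `0` can always take a new cell, and row `i + 1` can exactly when row `i` can
lose one), and two distinct diagrams have as many common upper covers as common lower covers:
at most one each, namely their join and meet, and one exists iff the other does by modularity.
Counting saturated chains by their last step gives `f_μ = ∑_{λ ⋖ μ} f_λ`, and the two facts above
turn this into `∑_{ν ⋗ μ} f_ν = (|μ| + 1) f_μ` by induction on `μ`. Hence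
`∑_{|ν| = n + 1} f_ν² = ∑_{|μ| = n} f_μ ∑_{ν ⋗ μ} f_ν = (n + 1) ∑_{|μ| = n} f_μ²`.
-/

/-- The number of standard Young tableaux of shape `μ`, counted as the number
of saturated chains from `∅` to `μ` in Young's lattice. -/
noncomputable def fSYT (μ : YoungDiagram) : ℕ :=
  Nat.card {l : List YoungDiagram //
    l.Chain' (· ⋖ ·) ∧ l.head? = some ⊥ ∧ l.getLast? = some μ}

open Finset

def RelChain {α : Type*} (r : α → α → Prop) (a b : α) : Type _ :=
  {l : List α // l.IsChain r ∧ l.head? = some a ∧ l.getLast? = some b}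

namespace RelChain

variable {α : Type*} {r : α → α → Prop} {a b : α}

def snoc (p : Σ c : {c // r c b}, RelChain r a c) : RelChain r a b :=
  ⟨p.2.1 ++ [b], p.2.2.1.append (List.isChain_singleton b) (by simp [p.2.2.2.2, p.1.2]),
    by simp [List.head?_append, p.2.2.2.1], List.getLast?_concat⟩

theorem snoc_injective : Function.Injective (snoc (r := r) (a := a) (b := b)) := by
  rintro ⟨⟨c, hc⟩, ⟨l, hl⟩⟩ ⟨⟨c', hc'⟩, ⟨l', hl'⟩⟩ h
  obtain rfl : l = l' := by simpa [snoc] using congrArg Subtype.val h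
  obtain rfl : c = c' := Option.some.inj (hl.2.2.symm.trans hl'.2.2)
  rfl

theorem snoc_surjective (hab : a ≠ b) : Function.Surjective (snoc (r := r) (a := a) (b := b)) := by
  rintro ⟨l, hl, hla, hlb⟩
  have hsplit : l.dropLast ++ [b] = l := List.dropLast_append_getLast? b hlb
  obtain ⟨c, hc⟩ : ∃ c, l.dropLast.getLast? = some c := by
    cases h : l.dropLast.getLast? with
    | some c => exact ⟨c, rfl⟩
    | none =>
      rw [List.getLast?_eq_none_iff.mp h, List.nil_append] at hsplit
      simp only [← hsplit, List.head?_cons, Option.some.injEq] at hla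
      exact absurd hla.symm hab
  refine ⟨⟨⟨c, ?_⟩, ⟨l.dropLast, hl.dropLast, ?_, hc⟩⟩, Subtype.ext hsplit⟩
  · rw [← hsplit, List.isChain_append] at hl
    exact hl.2.2 c hc b rfl
  · have hne : l.dropLast ≠ [] := by rintro h; simp [h] at hc
    rwa [← hsplit, List.head?_append_of_ne_nil _ hne] at hla

theorem eq_singleton (ha : ∀ c, ¬ r c a) (p : RelChain r a a) : p.1 = [a] := by
  obtain ⟨l, hl, -, hla⟩ := p
  have hsplit : l.dropLast ++ [a] = l := List.dropLast_append_getLast? a hla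
  cases h : l.dropLast.getLast? with
  | none =>
    rw [List.getLast?_eq_none_iff.mp h, List.nil_append] at hsplit
    exact hsplit.symm
  | some c =>
    rw [← hsplit, List.isChain_append] at hl
    exact absurd (hl.2.2 c h a rfl) (ha c)

theorem card_self (ha : ∀ c, ¬ r c a) : Nat.card (RelChain r a a) = 1 :=
  Nat.card_eq_one_iff_unique.mpr
    ⟨⟨fun p q => Subtype.ext ((eq_singleton ha p).trans (eq_singleton ha q).symm)⟩,
      ⟨⟨[a], List.isChain_singleton a, rfl, rfl⟩⟩⟩

theorem finite (hwf : WellFounded r) (hfin : ∀ b, {c | r c b}.Finite) (ha : ∀ c, ¬ r c a)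
    (b : α) : Finite (RelChain r a b) := by
  induction b using hwf.induction with
  | _ b ih =>
    rcases eq_or_ne a b with rfl | hab
    · exact Nat.finite_of_card_ne_zero (by rw [card_self ha]; exact one_ne_zero)
    · have : Finite {c // r c b} := (hfin b).to_subtype
      have := fun c : {c // r c b} => ih c c.2
      exact Finite.of_surjective _ (snoc_surjective hab)

theorem card_eq_sum [∀ c, Finite (RelChain r a c)] (hab : a ≠ b) (s : Finset α)
    (hs : ∀ c, c ∈ s ↔ r c b) :
    Nat.card (RelChain r a b) = ∑ c ∈ s, Nat.card (RelChain r a c) := by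
  let : Fintype {c // r c b} := Fintype.subtype s hs
  rw [← Nat.card_eq_of_bijective _ ⟨snoc_injective, snoc_surjective hab⟩, Nat.card_sigma,
    Finset.sum_subtype s hs]

end RelChain

section CovBy

variable {α : Type*} [Lattice α] {a b c : α}

theorem eq_sup_of_covBy_of_covBy (ha : a ⋖ c) (hb : b ⋖ c) (hab : a ≠ b) : c = a ⊔ b := by
  refine ((ha.eq_or_eq le_sup_left (sup_le ha.le hb.le)).resolve_left fun h => ?_).symm
  rcases hb.eq_or_eq (sup_eq_left.mp h) ha.le with h | h
  · exact hab h
  · exact ha.ne h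

theorem eq_inf_of_covBy_of_covBy (ha : c ⋖ a) (hb : c ⋖ b) (hab : a ≠ b) : c = a ⊓ b := by
  refine ((ha.eq_or_eq (le_inf ha.le hb.le) inf_le_left).resolve_right fun h => ?_).symm
  rcases hb.eq_or_eq ha.le (inf_eq_left.mp h) with h | h
  · exact ha.ne' h
  · exact hab h

theorem exists_covBy_covBy_iff [IsModularLattice α] (hab : a ≠ b) :
    (∃ c, a ⋖ c ∧ b ⋖ c) ↔ ∃ c, c ⋖ a ∧ c ⋖ b := by
  constructor
  · rintro ⟨c, ha, hb⟩
    obtain rfl := eq_sup_of_covBy_of_covBy ha hb hab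
    exact ⟨a ⊓ b, inf_covBy_of_covBy_sup_right hb, inf_covBy_of_covBy_sup_left ha⟩
  · rintro ⟨c, ha, hb⟩
    obtain rfl := eq_inf_of_covBy_of_covBy ha hb hab
    exact ⟨a ⊔ b, covBy_sup_of_inf_covBy_right hb, covBy_sup_of_inf_covBy_left ha⟩

end CovBy

theorem IsLowerSet.insert_of_forall_lt {α : Type*} [PartialOrder α] {s : Set α}
    (hs : IsLowerSet s) {a : α} (h : ∀ b < a, b ∈ s) : IsLowerSet (insert a s) := by
  rintro b c hcb (rfl | hb)
  · rcases hcb.lt_or_eq with hcb | rfl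
    · exact Or.inr (h c hcb)
    · exact Or.inl rfl
  · exact Or.inr (hs hcb hb)

namespace YoungDiagram

variable {μ ν : YoungDiagram} {i j n : ℕ}

theorem card_strictMono : StrictMono YoungDiagram.card :=
  fun _ _ h => Finset.card_lt_card (cells_ssubset_iff.mpr h)

instance : WellFoundedLT YoungDiagram :=
  ⟨Subrelation.wf (card_strictMono ·) (measure YoungDiagram.card).wf⟩

theorem card_eq_zero_iff : μ.card = 0 ↔ μ = ⊥ := by
  rw [YoungDiagram.card, Finset.card_eq_zero, YoungDiagram.ext_iff, cells_bot]

def insertCell (μ : YoungDiagram) (c : ℕ × ℕ) (h : ∀ b < c, b ∈ μ) : YoungDiagram where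
  cells := insert c μ.cells
  isLowerSet := by rw [coe_insert]; exact μ.isLowerSet.insert_of_forall_lt h

def eraseCell (μ : YoungDiagram) (c : ℕ × ℕ) (h : ∀ b, c < b → b ∉ μ) : YoungDiagram where
  cells := μ.cells.erase c
  isLowerSet := by
    rw [coe_erase]
    exact μ.isLowerSet.erase fun b hb hcb => hcb.eq_or_lt.elim Eq.symm fun h' => absurd hb (h b h')

theorem covBy_iff_card : μ ⋖ ν ↔ μ ≤ ν ∧ ν.card = μ.card + 1 := by
  constructor
  · intro h
    obtain ⟨c, hcmin⟩ := Finset.exists_minimal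
      (sdiff_nonempty.mpr (cells_subset_iff.not.mpr h.lt.not_ge))
    obtain ⟨hcν, hcμ⟩ := mem_sdiff.mp hcmin.prop
    have hlow : ∀ b < c, b ∈ μ := fun b hb => by
      by_contra hbμ
      exact hb.not_ge (hcmin.2 (mem_sdiff.mpr ⟨ν.isLowerSet hb.le hcν, hbμ⟩) hb.le)
    have hμζ : μ < μ.insertCell c hlow := cells_ssubset_iff.mp (ssubset_insert hcμ)
    have hζν : μ.insertCell c hlow ≤ ν := cells_subset_iff.mp (insert_subset hcν h.le)
    obtain rfl := (h.eq_or_eq hμζ.le hζν).resolve_left hμζ.ne'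
    exact ⟨h.le, card_insert_of_notMem hcμ⟩
  · rintro ⟨hle, hcard⟩
    refine ⟨hle.lt_of_ne (by rintro rfl; omega), fun ζ h₁ h₂ => ?_⟩
    have := card_strictMono h₁
    have := card_strictMono h₂
    omega

theorem card_eq_of_covBy (h : μ ⋖ ν) : ν.card = μ.card + 1 :=
  (covBy_iff_card.mp h).2

theorem exists_cells_eq_insert (h : μ ⋖ ν) : ∃ c ∉ μ, ν.cells = insert c μ.cells := by
  obtain ⟨hle, hcard⟩ := covBy_iff_card.mp h
  obtain ⟨c, hcν, hcμ⟩ := exists_of_ssubset (cells_ssubset_iff.mpr h.lt)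
  refine ⟨c, hcμ, (eq_of_subset_of_card_le (insert_subset hcν hle) ?_).symm⟩
  rw [card_insert_of_notMem hcμ]
  exact hcard.le

theorem lt_card_of_mem (h : (i, j) ∈ μ) : i < μ.card ∧ j < μ.card := by
  constructor
  · calc i < μ.colLen j := mem_iff_lt_colLen.mp h
      _ = (μ.col j).card := μ.colLen_eq_card
      _ ≤ μ.card := card_le_card (filter_subset _ _)
  · calc j < μ.rowLen i := mem_iff_lt_rowLen.mp h
      _ = (μ.row i).card := μ.rowLen_eq_card
      _ ≤ μ.card := card_le_card (filter_subset _ _)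

theorem finite_setOf_card_eq (n : ℕ) : {μ : YoungDiagram | μ.card = n}.Finite := by
  refine ((range n ×ˢ range n).powerset.finite_toSet.preimage (f := cells)
    fun μ _ ν _ h => YoungDiagram.ext h).subset fun μ (hμ : μ.card = n) => ?_
  rw [Set.mem_preimage, mem_coe, mem_powerset]
  intro ⟨i, j⟩ hc
  rw [mem_product, mem_range, mem_range, ← hμ]
  exact lt_card_of_mem hc

noncomputable def withCard (n : ℕ) : Finset YoungDiagram := (finite_setOf_card_eq n).toFinset

@[simp]
theorem mem_withCard : μ ∈ withCard n ↔ μ.card = n :=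
  Set.Finite.mem_toFinset _

theorem withCard_zero : withCard 0 = {⊥} := by
  ext μ
  rw [mem_withCard, card_eq_zero_iff, mem_singleton]

open scoped Classical in
noncomputable def upperCovers (μ : YoungDiagram) : Finset YoungDiagram :=
  {ν ∈ withCard (μ.card + 1) | μ ⋖ ν}

open scoped Classical in
noncomputable def lowerCovers (μ : YoungDiagram) : Finset YoungDiagram :=
  {ν ∈ withCard (μ.card - 1) | ν ⋖ μ}

@[simp]
theorem mem_upperCovers : ν ∈ μ.upperCovers ↔ μ ⋖ ν := by
  classical
  rw [upperCovers, mem_filter, mem_withCard, and_iff_right_iff_imp]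
  exact card_eq_of_covBy

@[simp]
theorem mem_lowerCovers : ν ∈ μ.lowerCovers ↔ ν ⋖ μ := by
  classical
  rw [lowerCovers, mem_filter, mem_withCard, and_iff_right_iff_imp]
  intro h
  have := card_eq_of_covBy h
  omega

theorem notMem_and_forall_lt_mem_iff :
    ((i, j) ∉ μ ∧ ∀ b < (i, j), b ∈ μ) ↔
      j = μ.rowLen i ∧ (i = 0 ∨ μ.rowLen i < μ.rowLen (i - 1)) := by
  rw [mem_iff_lt_rowLen, not_lt]
  constructor
  · rintro ⟨hj, hlt⟩
    have hj' : j ≤ μ.rowLen i := by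
      by_contra! h
      have := mem_iff_lt_rowLen.mp (hlt (i, μ.rowLen i) (Prod.lt_iff.mpr (Or.inr ⟨le_rfl, h⟩)))
      omega
    refine ⟨le_antisymm hj' hj, or_iff_not_imp_left.mpr fun hi => ?_⟩
    have := mem_iff_lt_rowLen.mp (hlt (i - 1, j) (Prod.lt_iff.mpr (Or.inl ⟨by omega, le_rfl⟩)))
    omega
  · rintro ⟨rfl, hi⟩
    refine ⟨le_rfl, fun ⟨p, q⟩ hpq => mem_iff_lt_rowLen.mpr ?_⟩
    obtain ⟨hp, hq⟩ | ⟨hp, hq⟩ := Prod.lt_iff.mp hpq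
    · have := μ.rowLen_anti p (i - 1) (by dsimp at hp; omega)
      dsimp at hp hq
      omega
    · have := μ.rowLen_anti p i hp
      dsimp at hq
      omega

theorem mem_and_forall_lt_notMem_iff :
    ((i, j) ∈ μ ∧ ∀ b, (i, j) < b → b ∉ μ) ↔
      j + 1 = μ.rowLen i ∧ μ.rowLen (i + 1) < μ.rowLen i := by
  rw [mem_iff_lt_rowLen]
  constructor
  · rintro ⟨hj, hgt⟩
    have h₁ := hgt (i, j + 1) (Prod.lt_iff.mpr (Or.inr ⟨le_rfl, j.lt_succ_self⟩))
    have h₂ := hgt (i + 1, j) (Prod.lt_iff.mpr (Or.inl ⟨i.lt_succ_self, le_rfl⟩))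
    rw [mem_iff_lt_rowLen, not_lt] at h₁ h₂
    omega
  · rintro ⟨hj, hi⟩
    refine ⟨by omega, fun ⟨p, q⟩ hpq hmem => ?_⟩
    rw [mem_iff_lt_rowLen] at hmem
    obtain ⟨hp, hq⟩ | ⟨hp, hq⟩ := Prod.lt_iff.mp hpq
    · have := μ.rowLen_anti (i + 1) p hp
      dsimp at hq
      omega
    · have := μ.rowLen_anti i p hp
      dsimp at hq
      omega

def removableRows (μ : YoungDiagram) : Finset ℕ :=
  {i ∈ range (μ.colLen 0) | μ.rowLen (i + 1) < μ.rowLen i}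

def addableRows (μ : YoungDiagram) : Finset ℕ :=
  insert 0 (μ.removableRows.map (addRightEmbedding 1))

theorem mem_removableRows : i ∈ μ.removableRows ↔ μ.rowLen (i + 1) < μ.rowLen i := by
  rw [removableRows, mem_filter, mem_range, and_iff_right_iff_imp, ← mem_iff_lt_colLen,
    mem_iff_lt_rowLen]
  omega

theorem mem_addableRows : i ∈ μ.addableRows ↔ i = 0 ∨ μ.rowLen i < μ.rowLen (i - 1) := by
  rcases i with _ | k
  · simp [addableRows]
  · simp [addableRows, mem_removableRows]

theorem card_addableRows : #μ.addableRows = #μ.removableRows + 1 := by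
  rw [addableRows, card_insert_of_notMem (by simp), card_map]

theorem card_upperCovers_eq_card_addableRows : #μ.upperCovers = #μ.addableRows := by
  have hcorner (i : ℕ) (hi : i ∈ μ.addableRows) : ∀ b < (i, μ.rowLen i), b ∈ μ :=
    (notMem_and_forall_lt_mem_iff.mpr ⟨rfl, mem_addableRows.mp hi⟩).2
  refine (card_bij (fun i hi => μ.insertCell _ (hcorner i hi)) (fun i hi => ?_)
    (fun i₁ hi₁ i₂ hi₂ h => ?_) fun ν hν => ?_).symm
  · rw [mem_upperCovers, covBy_iff_card]
    exact ⟨fun c hc => mem_insert_of_mem hc, card_insert_of_notMem (by simp [mem_iff_lt_rowLen])⟩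
  · have : (i₁, μ.rowLen i₁) ∈ (μ.insertCell _ (hcorner i₂ hi₂)).cells := h ▸ mem_insert_self _ _
    simp only [insertCell, mem_insert, Prod.mk.injEq, mem_cells, mem_iff_lt_rowLen,
      lt_self_iff_false, or_false] at this
    exact this.1
  · obtain ⟨⟨i, j⟩, hc, hν⟩ := exists_cells_eq_insert (mem_upperCovers.mp hν)
    have hlt : ∀ b < (i, j), b ∈ μ := fun b hb => by
      have : b ∈ ν.cells := ν.isLowerSet hb.le (by rw [hν]; exact mem_insert_self _ _)
      rw [hν, mem_insert] at this
      exact this.resolve_left hb.ne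
    obtain ⟨rfl, hi⟩ := notMem_and_forall_lt_mem_iff.mp ⟨hc, hlt⟩
    exact ⟨i, mem_addableRows.mpr hi, YoungDiagram.ext hν.symm⟩

theorem card_lowerCovers_eq_card_removableRows : #μ.lowerCovers = #μ.removableRows := by
  have hcorner (i : ℕ) (hi : i ∈ μ.removableRows) : ∀ b, (i, μ.rowLen i - 1) < b → b ∉ μ :=
    (mem_and_forall_lt_notMem_iff.mpr ⟨by have := mem_removableRows.mp hi; omega,
      mem_removableRows.mp hi⟩).2
  have hmem (i : ℕ) (hi : i ∈ μ.removableRows) : (i, μ.rowLen i - 1) ∈ μ := by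
    have := mem_removableRows.mp hi
    rw [mem_iff_lt_rowLen]
    omega
  refine (card_bij (fun i hi => μ.eraseCell _ (hcorner i hi)) (fun i hi => ?_)
    (fun i₁ hi₁ i₂ hi₂ h => ?_) fun ν hν => ?_).symm
  · rw [mem_lowerCovers, covBy_iff_card]
    refine ⟨fun c hc => mem_of_mem_erase hc, ?_⟩
    exact (card_erase_add_one (hmem i hi)).symm
  · have : (i₁, μ.rowLen i₁ - 1) ∉ (μ.eraseCell _ (hcorner i₂ hi₂)).cells :=
      h ▸ notMem_erase _ _
    simp only [eraseCell, mem_erase, ne_eq, Prod.mk.injEq, not_and, mem_cells] at this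
    by_contra hne
    exact this (fun h => absurd h hne) (hmem i₁ hi₁)
  · obtain ⟨⟨i, j⟩, hc, hμ⟩ := exists_cells_eq_insert (mem_lowerCovers.mp hν)
    have hgt : ∀ b, (i, j) < b → b ∉ μ := fun b hb hbμ => by
      have : b ∈ μ.cells := hbμ
      rw [hμ, mem_insert] at this
      exact hc (ν.isLowerSet hb.le (this.resolve_left hb.ne'))
    have hcμ : (i, j) ∈ μ.cells := by rw [hμ]; exact mem_insert_self _ _
    obtain ⟨hj, hi⟩ := mem_and_forall_lt_notMem_iff.mp ⟨hcμ, hgt⟩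
    obtain rfl : j = μ.rowLen i - 1 := by omega
    refine ⟨i, mem_removableRows.mpr hi, YoungDiagram.ext ?_⟩
    change μ.cells.erase _ = _
    rw [hμ, erase_insert hc]

theorem card_upperCovers : #μ.upperCovers = #μ.lowerCovers + 1 := by
  rw [card_upperCovers_eq_card_addableRows, card_addableRows,
    card_lowerCovers_eq_card_removableRows]

open scoped Classical in
theorem card_filter_upperCovers_covBy (μ κ : YoungDiagram) :
    #{ν ∈ μ.upperCovers | κ ⋖ ν} = #{ρ ∈ μ.lowerCovers | ρ ⋖ κ} + if κ = μ then 1 else 0 := by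
  rcases eq_or_ne κ μ with rfl | hne
  · rw [if_pos rfl, filter_true_of_mem fun ν hν => mem_upperCovers.mp hν,
      filter_true_of_mem fun ρ hρ => mem_lowerCovers.mp hρ, card_upperCovers]
  have hup : #{ν ∈ μ.upperCovers | κ ⋖ ν} ≤ 1 := card_le_one.mpr fun ν hν ν' hν' => by
    simp only [mem_filter, mem_upperCovers] at hν hν'
    rw [eq_sup_of_covBy_of_covBy hν.1 hν.2 hne.symm, eq_sup_of_covBy_of_covBy hν'.1 hν'.2 hne.symm]
  have hlow : #{ρ ∈ μ.lowerCovers | ρ ⋖ κ} ≤ 1 := card_le_one.mpr fun ρ hρ ρ' hρ' => by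
    simp only [mem_filter, mem_lowerCovers] at hρ hρ'
    rw [eq_inf_of_covBy_of_covBy hρ.1 hρ.2 hne.symm, eq_inf_of_covBy_of_covBy hρ'.1 hρ'.2 hne.symm]
  have hiff : 0 < #{ν ∈ μ.upperCovers | κ ⋖ ν} ↔ 0 < #{ρ ∈ μ.lowerCovers | ρ ⋖ κ} := by
    simp only [card_pos, filter_nonempty_iff, mem_upperCovers, mem_lowerCovers]
    exact exists_covBy_covBy_iff hne.symm
  rw [if_neg hne]
  omega

-- The relation `DU = UD + 1` between the up and down operators of Young's lattice.
theorem sum_upperCovers_sum_lowerCovers {M : Type*} [AddCommMonoid M] (μ : YoungDiagram)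
    (g : YoungDiagram → M) :
    ∑ ν ∈ μ.upperCovers, ∑ κ ∈ ν.lowerCovers, g κ =
      ∑ ρ ∈ μ.lowerCovers, ∑ κ ∈ ρ.upperCovers, g κ + g μ := by
  classical
  have hup : ∑ ν ∈ μ.upperCovers, ∑ κ ∈ ν.lowerCovers, g κ =
      ∑ κ ∈ withCard μ.card, #{ν ∈ μ.upperCovers | κ ⋖ ν} • g κ := by
    rw [sum_comm' (t' := withCard μ.card) (s' := fun κ => {ν ∈ μ.upperCovers | κ ⋖ ν})]
    · simp only [sum_const]
    · intro ν κ
      simp only [mem_filter, mem_upperCovers, mem_lowerCovers, mem_withCard]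
      exact ⟨fun h => ⟨h, by linarith [card_eq_of_covBy h.1, card_eq_of_covBy h.2]⟩, And.left⟩
  have hlow : ∑ ρ ∈ μ.lowerCovers, ∑ κ ∈ ρ.upperCovers, g κ =
      ∑ κ ∈ withCard μ.card, #{ρ ∈ μ.lowerCovers | ρ ⋖ κ} • g κ := by
    rw [sum_comm' (t' := withCard μ.card) (s' := fun κ => {ρ ∈ μ.lowerCovers | ρ ⋖ κ})]
    · simp only [sum_const]
    · intro ρ κ
      simp only [mem_filter, mem_upperCovers, mem_lowerCovers, mem_withCard]
      exact ⟨fun h => ⟨h, by linarith [card_eq_of_covBy h.1, card_eq_of_covBy h.2]⟩, And.left⟩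
  simp [hup, hlow, card_filter_upperCovers_covBy, add_smul, sum_add_distrib, ite_smul]

instance (μ : YoungDiagram) : Finite (RelChain (· ⋖ ·) ⊥ μ) :=
  RelChain.finite (Subrelation.wf CovBy.lt wellFounded_lt)
    (fun μ => μ.lowerCovers.finite_toSet.subset fun _ hν => mem_lowerCovers.mpr hν)
    (fun _ h => not_lt_bot h.lt) μ

theorem fSYT_eq_natCard_relChain (μ : YoungDiagram) :
    fSYT μ = Nat.card (RelChain (· ⋖ ·) ⊥ μ) :=
  rfl

theorem fSYT_bot : fSYT ⊥ = 1 := by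
  rw [fSYT_eq_natCard_relChain, RelChain.card_self fun _ h => not_lt_bot h.lt]

theorem fSYT_eq_sum_lowerCovers (hμ : μ ≠ ⊥) : fSYT μ = ∑ ρ ∈ μ.lowerCovers, fSYT ρ := by
  simp only [fSYT_eq_natCard_relChain]
  exact RelChain.card_eq_sum hμ.symm _ fun _ => mem_lowerCovers

theorem sum_fSYT_upperCovers (μ : YoungDiagram) :
    ∑ ν ∈ μ.upperCovers, fSYT ν = (μ.card + 1) * fSYT μ := by
  induction μ using WellFoundedLT.induction with
  | _ μ ih =>
    have hlow : ∑ ρ ∈ μ.lowerCovers, (ρ.card + 1) * fSYT ρ = μ.card * fSYT μ := by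
      rcases eq_or_ne μ ⊥ with rfl | hμ
      · rw [sum_eq_zero fun ρ hρ => absurd (mem_lowerCovers.mp hρ).lt not_lt_bot,
          card_eq_zero_iff.mpr rfl, zero_mul]
      · rw [fSYT_eq_sum_lowerCovers hμ, mul_sum]
        refine sum_congr rfl fun ρ hρ => ?_
        rw [card_eq_of_covBy (mem_lowerCovers.mp hρ)]
    calc ∑ ν ∈ μ.upperCovers, fSYT ν
        = ∑ ν ∈ μ.upperCovers, ∑ κ ∈ ν.lowerCovers, fSYT κ :=
          sum_congr rfl fun ν hν =>
            fSYT_eq_sum_lowerCovers (ne_bot_of_gt (mem_upperCovers.mp hν).lt)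
      _ = ∑ ρ ∈ μ.lowerCovers, ∑ κ ∈ ρ.upperCovers, fSYT κ + fSYT μ :=
          sum_upperCovers_sum_lowerCovers μ fSYT
      _ = ∑ ρ ∈ μ.lowerCovers, (ρ.card + 1) * fSYT ρ + fSYT μ := by
          rw [sum_congr rfl fun ρ hρ => ih ρ (mem_lowerCovers.mp hρ).lt]
      _ = (μ.card + 1) * fSYT μ := by rw [hlow, add_one_mul]

theorem sum_sq_fSYT_withCard_succ (n : ℕ) :
    ∑ ν ∈ withCard (n + 1), fSYT ν ^ 2 = (n + 1) * ∑ μ ∈ withCard n, fSYT μ ^ 2 := by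
  calc ∑ ν ∈ withCard (n + 1), fSYT ν ^ 2
      = ∑ ν ∈ withCard (n + 1), ∑ μ ∈ ν.lowerCovers, fSYT ν * fSYT μ := by
        refine sum_congr rfl fun ν hν => ?_
        have hν_ne : ν ≠ ⊥ := fun h => by rw [mem_withCard, card_eq_zero_iff.mpr h] at hν; omega
        rw [← mul_sum, ← fSYT_eq_sum_lowerCovers hν_ne, sq]
    _ = ∑ μ ∈ withCard n, ∑ ν ∈ μ.upperCovers, fSYT ν * fSYT μ := by
        refine sum_comm' fun ν μ => ?_
        simp only [mem_withCard, mem_lowerCovers, mem_upperCovers]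
        exact ⟨fun h => ⟨h.2, by linarith [card_eq_of_covBy h.2]⟩,
          fun h => ⟨by linarith [card_eq_of_covBy h.1], h.1⟩⟩
    _ = (n + 1) * ∑ μ ∈ withCard n, fSYT μ ^ 2 := by
        rw [mul_sum]
        refine sum_congr rfl fun μ hμ => ?_
        rw [← sum_mul, sum_fSYT_upperCovers, mem_withCard.mp hμ, sq, mul_assoc]

theorem sum_sq_fSYT_withCard (n : ℕ) : ∑ μ ∈ withCard n, fSYT μ ^ 2 = n.factorial := by
  induction n with
  | zero => rw [withCard_zero, sum_singleton, fSYT_bot, one_pow, Nat.factorial_zero]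
  | succ n ih => rw [sum_sq_fSYT_withCard_succ, ih, Nat.factorial_succ]

end YoungDiagram

/-- The RSK identity: `Σ_{λ⊢n} f_λ² = n!`. -/
theorem stmt_15 (n : ℕ) :
    ∑ᶠ lam : {m : YoungDiagram // m.card = n}, (fSYT lam.1) ^ 2 = n.factorial := by
  rw [← YoungDiagram.sum_sq_fSYT_withCard n, YoungDiagram.withCard,
    ← finsum_mem_eq_finite_toFinset_sum]
  exact finsum_set_coe_eq_finsum_mem (f := fun μ => fSYT μ ^ 2) {μ | μ.card = n}
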